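/- Let L_E = {A t B : A, B ∈ {a,b}⁺, each of A and B begins with the letter a and contains the letter b} (that is, L_E = a⁺b{a,b}* t a⁺b{a,b}*, a language over three distinct letters a, b, t of 𝔄). Then the 6-element monoid E¹ and the syntactic monoid M_synt(L_E) satisfy exactly the same identities (they generate the same variety 𝔼¹). -/

import Mathlib

/-- Words over the countably infinite alphabet `ℕ`. -/
abbrev Word : Type := List ℕ

/-- A monoid `M` satisfies the identity `u ≈ v` if every substitution of letters by
elements of `M` (equivalently, every monoid homomorphism from the free monoid) equalizes
`u` and `v`. -/
def Satisfies (M : Type*) [Monoid M] (u v : Word) : Prop :=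
  ∀ φ : ℕ → M, (u.map φ).prod = (v.map φ).prod

/-- A set of words `W` is stable with respect to a monoid `M`. -/
def Stable (W : Set Word) (M : Type*) [Monoid M] : Prop :=
  ∀ u v : Word, u ∈ W → Satisfies M u v → v ∈ W

/-- `u` is a `τ`-term for the monoid `M`. -/
def IsTerm (τ : Word → Word → Prop) (M : Type*) [Monoid M] (u : Word) : Prop :=
  ∀ v : Word, Satisfies M u v → τ u v

/-- The set of simple letters of a word. -/
def simpSet (u : Word) : Set ℕ := {x | u.count x = 1}

/-- The set of multiple letters of a word. -/
def mulSet (u : Word) : Set ℕ := {x | 2 ≤ u.count x}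

/-- The set of letters of a word. -/
def conSet (u : Word) : Set ℕ := {x | x ∈ u}

/-- The monoid congruence on the free monoid generated by the pairs `(a, a²)`. -/
inductive tau1 : Word → Word → Prop
  | base (a : ℕ) : tau1 [a] [a, a]
  | refl (u : Word) : tau1 u u
  | symm {u v : Word} : tau1 u v → tau1 v u
  | trans {u v x : Word} : tau1 u v → tau1 v x → tau1 u x
  | append {u v u' v' : Word} : tau1 u v → tau1 u' v' → tau1 (u ++ u') (v ++ v')

/-- The relation γ. -/
def gamma (u v : Word) : Prop := simpSet u = simpSet v ∧ mulSet u = mulSet v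

/-- The relation `τ₁ ∧ γ`. -/
def tau1gamma (u v : Word) : Prop := tau1 u v ∧ gamma u v

/-- A word is block-simple if every factor all of whose letters are multiple
(in particular, every block) involves at most one letter. -/
def BlockSimple (u : Word) : Prop :=
  ∀ p f s : Word, u = p ++ f ++ s → (∀ x ∈ f, x ∈ mulSet u) →
    ∀ x ∈ f, ∀ y ∈ f, x = y

/-- `assemble m t A = A 0 ++ t 0 :: A 1 ++ t 1 :: ... ++ t (m-1) :: A m`:
the word with blocks `A i` separated by the letters `t i`. -/
def assemble (m : ℕ) (t : Fin m → ℕ) (A : Fin (m + 1) → Word) : Word :=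
  A 0 ++ (List.ofFn fun i : Fin m => t i :: A i.succ).flatten

/-- Common core of the relations `β` and `∼_Q`: `u` and `v` decompose into blocks
separated by the same simple letters in the same order, corresponding blocks have the
same content; when `withOrder = true`, in corresponding blocks the order of first
occurrences of letters coincides. -/
def betaAux (withOrder : Bool) (u v : Word) : Prop :=
  ∃ (m : ℕ) (t : Fin m → ℕ) (A B : Fin (m + 1) → Word),
    u = assemble m t A ∧ v = assemble m t B ∧
    (∀ i : Fin m, u.count (t i) = 1) ∧ (∀ i : Fin m, v.count (t i) = 1) ∧
    (∀ i : Fin (m + 1), ∀ x ∈ A i, x ∈ mulSet u) ∧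
    (∀ i : Fin (m + 1), ∀ x ∈ B i, x ∈ mulSet v) ∧
    (∀ i : Fin (m + 1), ∀ x : ℕ, x ∈ A i ↔ x ∈ B i) ∧
    (withOrder = true → ∀ i : Fin (m + 1), ∀ x y : ℕ, x ∈ A i → y ∈ A i → x ≠ y →
      ((A i).idxOf x < (A i).idxOf y ↔ (B i).idxOf x < (B i).idxOf y))

/-- The relation β. -/
def beta : Word → Word → Prop := betaAux true

/-- The relation `∼_Q` (β without the condition on the order of first occurrences). -/
def simQ : Word → Word → Prop := betaAux false

/-- The words `u_n` (letters: `a = 0`, `b = 1`, `t_k = k + 1`). -/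
def uW : ℕ → Word
  | 0 => [0, 0, 1, 1]
  | k + 1 => (if k % 2 = 0 then 0 else 1) :: (k + 2) :: uW k

/-- The words `v_n` (letters: `a = 0`, `b = 1`, `t_k = k + 1`). -/
def vW : ℕ → Word
  | 0 => [1, 1, 0, 0]
  | k + 1 => (if k % 2 = 0 then 0 else 1) :: (k + 2) :: vW k

/-- A monoid satisfies the identity system
`Σ_n = {xtx ≈ xtx², xtx ≈ x²tx, xy²x ≈ x²y², u_n ≈ v_n}`. -/
def SatSigma (n : ℕ) (N : Type*) [Monoid N] : Prop :=
  Satisfies N [0, 1, 0] [0, 1, 0, 0] ∧ Satisfies N [0, 1, 0] [0, 0, 1, 0] ∧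
  Satisfies N [0, 1, 1, 0] [0, 0, 1, 1] ∧ Satisfies N (uW n) (vW n)

/-- A monoid is finitely based. -/
def FinBased (M : Type*) [Monoid M] : Prop :=
  ∃ S : Finset (Word × Word),
    (∀ p ∈ S, Satisfies M p.1 p.2) ∧
    ∀ (N : Type) [Monoid N], (∀ p ∈ S, Satisfies N p.1 p.2) →
      ∀ u v : Word, Satisfies M u v → Satisfies N u v

/-- `U_n = x y₁² y₂² ⋯ y_n² x` (letters: `x = 0`, `y_i = i`). -/
def Uw (n : ℕ) : Word := 0 :: (((List.range n).map fun i => [i + 1, i + 1]).flatten ++ [0])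

/-- `V_n = x y₁² x y₂² x ⋯ x y_n² x` (letters: `x = 0`, `y_i = i`). -/
def Vw (n : ℕ) : Word := 0 :: ((List.range n).map fun i => [i + 1, i + 1, 0]).flatten

/-- The language `a⁺bb⁺ta⁺ = {aⁱ bʲ t aᵏ : i, k ≥ 1, j ≥ 2}` (`a = 0`, `b = 1`, `t = 2`). -/
def Lab : Set Word := {w | ∃ i j k : ℕ, 1 ≤ i ∧ 2 ≤ j ∧ 1 ≤ k ∧
  w = List.replicate i 0 ++ List.replicate j 1 ++ 2 :: List.replicate k 0}

/-- The β-class of `atb²a` as an explicit language: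
`{aⁱ t bʲ a w : i ≥ 1, j ≥ 2} ∪ {aⁱ t bʲ aᵏ b w : i, j, k ≥ 1}`, `w ∈ {a,b}*`
(`a = 0`, `b = 1`, `t = 2`). -/
def LatBBa : Set Word :=
  {w | (∃ i j : ℕ, 1 ≤ i ∧ 2 ≤ j ∧ ∃ r : Word, (∀ x ∈ r, x = 0 ∨ x = 1) ∧
      w = List.replicate i 0 ++ 2 :: (List.replicate j 1 ++ 0 :: r)) ∨
    (∃ i j k : ℕ, 1 ≤ i ∧ 1 ≤ j ∧ 1 ≤ k ∧ ∃ r : Word, (∀ x ∈ r, x = 0 ∨ x = 1) ∧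
      w = List.replicate i 0 ++ 2 :: (List.replicate j 1 ++ (List.replicate k 0 ++ 1 :: r)))}

/-- `u` is a factor (subword) of `x`. -/
def IsFactorOf (u x : Word) : Prop := ∃ p s : Word, x = p ++ u ++ s

/-- The syntactic congruence of a language `W`. -/
def SyntCon (W : Set Word) : Con (FreeMonoid ℕ) where
  r u v := ∀ p s : Word,
    p ++ FreeMonoid.toList u ++ s ∈ W ↔ p ++ FreeMonoid.toList v ++ s ∈ W
  iseqv := ⟨fun _ _ _ => Iff.rfl, fun h p s => (h p s).symm,
    fun h h' p s => (h p s).trans (h' p s)⟩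
  mul' := by
    intro w x y z h h' p s
    have h1 := h p (FreeMonoid.toList y ++ s)
    have h2 := h' (p ++ FreeMonoid.toList x) s
    simp only [FreeMonoid.toList_mul, List.append_assoc] at h1 h2 ⊢
    exact h1.trans h2

/-- The syntactic monoid of a language `W`. -/
abbrev SyntMonoid (W : Set Word) : Type := (SyntCon W).Quotient

/-! ### Concrete finite monoids -/

/-- The 7-element monoid `A¹`: identity `e1` adjoined to the semigroup `A = ⟨a,b,c ∣ a²=a, b²=b, ab=ca=0, ac=cb=c⟩ = {a,b,c,ba,bc,0}` (`z0` is the zero). -/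
inductive A1M : Type
  | e1 | a | b | c | ba | bc | z0
deriving DecidableEq

/-- Multiplication of `A1M`. -/
def A1M.mul : A1M → A1M → A1M
  | .e1, .e1 => .e1
  | .e1, .a => .a
  | .e1, .b => .b
  | .e1, .c => .c
  | .e1, .ba => .ba
  | .e1, .bc => .bc
  | .e1, .z0 => .z0
  | .a, .e1 => .a
  | .a, .a => .a
  | .a, .b => .z0
  | .a, .c => .c
  | .a, .ba => .z0
  | .a, .bc => .z0
  | .a, .z0 => .z0
  | .b, .e1 => .b
  | .b, .a => .ba
  | .b, .b => .b
  | .b, .c => .bc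
  | .b, .ba => .ba
  | .b, .bc => .bc
  | .b, .z0 => .z0
  | .c, .e1 => .c
  | .c, .a => .z0
  | .c, .b => .c
  | .c, .c => .z0
  | .c, .ba => .z0
  | .c, .bc => .z0
  | .c, .z0 => .z0
  | .ba, .e1 => .ba
  | .ba, .a => .ba
  | .ba, .b => .z0
  | .ba, .c => .bc
  | .ba, .ba => .z0
  | .ba, .bc => .z0
  | .ba, .z0 => .z0
  | .bc, .e1 => .bc
  | .bc, .a => .z0
  | .bc, .b => .bc
  | .bc, .c => .z0
  | .bc, .ba => .z0
  | .bc, .bc => .z0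
  | .bc, .z0 => .z0
  | .z0, .e1 => .z0
  | .z0, .a => .z0
  | .z0, .b => .z0
  | .z0, .c => .z0
  | .z0, .ba => .z0
  | .z0, .bc => .z0
  | .z0, .z0 => .z0

instance : Monoid A1M where
  one := .e1
  mul := A1M.mul
  mul_assoc := by intro x y z; cases x <;> cases y <;> cases z <;> rfl
  one_mul := by intro x; cases x <;> rfl
  mul_one := by intro x; cases x <;> rfl
/-- The 6-element monoid `E¹`: identity `e1` adjoined to the semigroup `E = ⟨a,b,c ∣ a²=ab=0, ba=ca=a, b²=bc=b, c²=cb=c⟩ = {a,b,c,ac,0}` (`z0` is the zero). -/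
inductive E1M : Type
  | e1 | a | b | c | ac | z0
deriving DecidableEq

/-- Multiplication of `E1M`. -/
def E1M.mul : E1M → E1M → E1M
  | .e1, .e1 => .e1
  | .e1, .a => .a
  | .e1, .b => .b
  | .e1, .c => .c
  | .e1, .ac => .ac
  | .e1, .z0 => .z0
  | .a, .e1 => .a
  | .a, .a => .z0
  | .a, .b => .z0
  | .a, .c => .ac
  | .a, .ac => .z0
  | .a, .z0 => .z0
  | .b, .e1 => .b
  | .b, .a => .a
  | .b, .b => .b
  | .b, .c => .b
  | .b, .ac => .ac
  | .b, .z0 => .z0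
  | .c, .e1 => .c
  | .c, .a => .a
  | .c, .b => .c
  | .c, .c => .c
  | .c, .ac => .ac
  | .c, .z0 => .z0
  | .ac, .e1 => .ac
  | .ac, .a => .z0
  | .ac, .b => .ac
  | .ac, .c => .ac
  | .ac, .ac => .z0
  | .ac, .z0 => .z0
  | .z0, .e1 => .z0
  | .z0, .a => .z0
  | .z0, .b => .z0
  | .z0, .c => .z0
  | .z0, .ac => .z0
  | .z0, .z0 => .z0

instance : Monoid E1M where
  one := .e1
  mul := E1M.mul
  mul_assoc := by intro x y z; cases x <;> cases y <;> cases z <;> rfl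
  one_mul := by intro x; cases x <;> rfl
  mul_one := by intro x; cases x <;> rfl
/-- The 5-element monoid `A₀¹`: identity `e1` adjoined to the semigroup `A₀ = ⟨a,b ∣ a²=a, b²=b, ab=0⟩ = {a,b,ba,0}` (`z0` is the zero). -/
inductive A01M : Type
  | e1 | a | b | ba | z0
deriving DecidableEq

/-- Multiplication of `A01M`. -/
def A01M.mul : A01M → A01M → A01M
  | .e1, .e1 => .e1
  | .e1, .a => .a
  | .e1, .b => .b
  | .e1, .ba => .ba
  | .e1, .z0 => .z0
  | .a, .e1 => .a
  | .a, .a => .a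
  | .a, .b => .z0
  | .a, .ba => .z0
  | .a, .z0 => .z0
  | .b, .e1 => .b
  | .b, .a => .ba
  | .b, .b => .b
  | .b, .ba => .ba
  | .b, .z0 => .z0
  | .ba, .e1 => .ba
  | .ba, .a => .ba
  | .ba, .b => .z0
  | .ba, .ba => .z0
  | .ba, .z0 => .z0
  | .z0, .e1 => .z0
  | .z0, .a => .z0
  | .z0, .b => .z0
  | .z0, .ba => .z0
  | .z0, .z0 => .z0

instance : Monoid A01M where
  one := .e1
  mul := A01M.mul
  mul_assoc := by intro x y z; cases x <;> cases y <;> cases z <;> rfl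
  one_mul := by intro x; cases x <;> rfl
  mul_one := by intro x; cases x <;> rfl


/-- The 3-element monoid `L₂¹`: the two-element left-zero semigroup with identity adjoined. -/
inductive LZ1 : Type
  | e | a | b
deriving DecidableEq

instance instFintypeLZ1 : Fintype LZ1 :=
  ⟨{.e, .a, .b}, by intro x; cases x <;> simp⟩

instance : Monoid LZ1 where
  one := .e
  mul x y := match x with
    | .e => y
    | .a => .a
    | .b => .b
  mul_assoc := by decide
  one_mul := by decide
  mul_one := by decide

/-- The 3-element monoid `M(x) = {1, x, 0}` with `x·x = 0`. -/
inductive MX : Type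
  | e | x | z
deriving DecidableEq

instance instFintypeMX : Fintype MX :=
  ⟨{.e, .x, .z}, by intro x; cases x <;> simp⟩

instance : Monoid MX where
  one := .e
  mul a b := match a, b with
    | .e, b => b
    | a, .e => a
    | _, _ => .z
  mul_assoc := by decide
  one_mul := by decide
  mul_one := by decide


/-! ### Auxiliary development for `stmt18` -/

section Stmt18Aux

/-- States of a DFA recognizing `L_E`. -/
inductive St : Type
  | s0 | sa | sg | st | sta | sacc | sd
deriving DecidableEq

instance : Fintype St :=
  ⟨⟨↑[St.s0, .sa, .sg, .st, .sta, .sacc, .sd], by decide⟩, by intro x; cases x <;> decide⟩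

/-- Transition function of the DFA. -/
def step : St → ℕ → St
  | .sd, _ => .sd
  | .s0, 0 => .sa
  | .sa, 0 => .sa
  | .sg, 0 => .sg
  | .st, 0 => .sta
  | .sta, 0 => .sta
  | .sacc, 0 => .sacc
  | .sa, 1 => .sg
  | .sg, 1 => .sg
  | .sta, 1 => .sacc
  | .sacc, 1 => .sacc
  | .sg, 2 => .st
  | _, _ => .sd

/-- Run the DFA from state `q` on word `w`. -/
def runS (q : St) (w : Word) : St := w.foldl step q

/-- The transformation of the state set induced by a word. -/
def trOf (w : Word) : St → St := fun q => runS q w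

lemma runS_append (q : St) (w₁ w₂ : Word) :
    runS q (w₁ ++ w₂) = runS (runS q w₁) w₂ := List.foldl_append ..

lemma runS_snoc (q : St) (w : Word) (c : ℕ) :
    runS q (w ++ [c]) = step (runS q w) c := runS_append ..

lemma trOf_snoc (w : Word) (c : ℕ) :
    trOf (w ++ [c]) = fun q => step (trOf w q) c := by
  funext q; exact runS_snoc ..

lemma step_ge3 (q : St) (n : ℕ) : step q (n + 3) = .sd := by cases q <;> rfl

/-- A good block: over `{0,1}`, starts with `0`, contains `1`. -/
def Good (w : Word) : Prop :=
  (∀ c ∈ w, c = 0 ∨ c = 1) ∧ w.head? = some 0 ∧ 1 ∈ w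

/-- The language `L_E`. -/
def WL : Set Word := {x : Word | ∃ A B : Word,
  ((∀ c ∈ A, c = 0 ∨ c = 1) ∧ A.head? = some 0 ∧ 1 ∈ A) ∧
  ((∀ c ∈ B, c = 0 ∨ c = 1) ∧ B.head? = some 0 ∧ 1 ∈ B) ∧
  x = A ++ 2 :: B}

lemma mem_WL {x : Word} : x ∈ WL ↔ ∃ A B : Word, Good A ∧ Good B ∧ x = A ++ 2 :: B :=
  Iff.rfl

lemma run_sg (w : Word) (h : ∀ x ∈ w, x = 0 ∨ x = 1) : runS .sg w = .sg := by
  induction w with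
  | nil => rfl
  | cons a t ih =>
    rcases h a (List.mem_cons_self ..) with rfl | rfl <;>
      exact ih fun x hx => h x (List.mem_cons_of_mem _ hx)

lemma run_sacc (w : Word) (h : ∀ x ∈ w, x = 0 ∨ x = 1) : runS .sacc w = .sacc := by
  induction w with
  | nil => rfl
  | cons a t ih =>
    rcases h a (List.mem_cons_self ..) with rfl | rfl <;>
      exact ih fun x hx => h x (List.mem_cons_of_mem _ hx)

lemma run_sa (w : Word) (h : ∀ x ∈ w, x = 0 ∨ x = 1) :
    runS .sa w = if 1 ∈ w then .sg else .sa := by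
  induction w with
  | nil => rfl
  | cons a t ih =>
    rcases h a (List.mem_cons_self ..) with rfl | rfl
    · have := ih fun x hx => h x (List.mem_cons_of_mem _ hx)
      simpa [runS, List.mem_cons, step] using this
    · have := run_sg t fun x hx => h x (List.mem_cons_of_mem _ hx)
      simpa [runS, List.mem_cons, step] using this

lemma run_sta (w : Word) (h : ∀ x ∈ w, x = 0 ∨ x = 1) :
    runS .sta w = if 1 ∈ w then .sacc else .sta := by
  induction w with
  | nil => rfl
  | cons a t ih =>
    rcases h a (List.mem_cons_self ..) with rfl | rfl
    · have := ih fun x hx => h x (List.mem_cons_of_mem _ hx)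
      simpa [runS, List.mem_cons, step] using this
    · have := run_sacc t fun x hx => h x (List.mem_cons_of_mem _ hx)
      simpa [runS, List.mem_cons, step] using this

lemma good_head {A : Word} (hA : Good A) : ∃ A', A = 0 :: A' := by
  rcases A with _ | ⟨a, A'⟩
  · simp [Good] at hA
  · obtain ⟨-, h2, -⟩ := hA
    simp only [List.head?_cons, Option.some.injEq] at h2
    exact ⟨A', by rw [h2]⟩

lemma WL_run {x : Word} (hx : x ∈ WL) : runS .s0 x = .sacc := by
  obtain ⟨A, B, hA, hB, rfl⟩ := mem_WL.1 hx
  obtain ⟨A', rfl⟩ := good_head hA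
  obtain ⟨B', rfl⟩ := good_head hB
  have h1A : (1 : ℕ) ∈ A' := by
    have := hA.2.2; simpa [List.mem_cons] using this
  have h1B : (1 : ℕ) ∈ B' := by
    have := hB.2.2; simpa [List.mem_cons] using this
  have hA' : ∀ c ∈ A', c = 0 ∨ c = 1 := fun c hc => hA.1 c (List.mem_cons_of_mem _ hc)
  have hB' : ∀ c ∈ B', c = 0 ∨ c = 1 := fun c hc => hB.1 c (List.mem_cons_of_mem _ hc)
  have : runS .s0 ((0 :: A') ++ 2 :: 0 :: B') =
      runS (runS .s0 (0 :: A')) (2 :: 0 :: B') := runS_append ..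
  rw [this]
  have e1 : runS .s0 (0 :: A') = .sg := by
    show runS .sa A' = .sg
    rw [run_sa A' hA', if_pos h1A]
  rw [e1]
  show runS .sta B' = .sacc
  rw [run_sta B' hB', if_pos h1B]

/-- The semantic class of each state. -/
def Cls : St → Word → Prop
  | .s0, w => w = []
  | .sa, w => w ≠ [] ∧ ∀ x ∈ w, x = 0
  | .sg, w => Good w
  | .st, w => ∃ A, Good A ∧ w = A ++ [2]
  | .sta, w => ∃ A B, Good A ∧ (B ≠ [] ∧ ∀ x ∈ B, x = 0) ∧ w = A ++ 2 :: B
  | .sacc, w => w ∈ WL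
  | .sd, _ => True

lemma head?_zeros {w : Word} (h1 : w ≠ []) (h2 : ∀ x ∈ w, x = 0) :
    w.head? = some 0 := by
  rcases w with _ | ⟨a, t⟩
  · exact absurd rfl h1
  · simp [h2 a (List.mem_cons_self ..)]

lemma good_snoc {w : Word} (hw : Good w) {c : ℕ} (hc : c = 0 ∨ c = 1) :
    Good (w ++ [c]) := by
  obtain ⟨h1, h2, h3⟩ := hw
  refine ⟨?_, ?_, List.mem_append_left _ h3⟩
  · intro x hx
    rcases List.mem_append.1 hx with hx | hx
    · exact h1 x hx
    · simp only [List.mem_singleton] at hx; exact hx ▸ hc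
  · have hne : w ≠ [] := by rintro rfl; simp at h3
    rwa [List.head?_append_of_ne_nil _ hne]

lemma good_of_zeros_snoc {w : Word} (h1 : w ≠ []) (h2 : ∀ x ∈ w, x = 0) :
    Good (w ++ [1]) := by
  refine ⟨?_, ?_, List.mem_append_right _ (List.mem_singleton.2 rfl)⟩
  · intro x hx
    rcases List.mem_append.1 hx with hx | hx
    · exact Or.inl (h2 x hx)
    · simp only [List.mem_singleton] at hx; exact Or.inr hx
  · rw [List.head?_append_of_ne_nil _ h1]; exact head?_zeros h1 h2

lemma classify (w : Word) : Cls (runS .s0 w) w := by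
  induction w using List.reverseRecOn with
  | nil => rfl
  | append_singleton w c ih =>
    rw [runS_snoc]
    cases hq : runS .s0 w <;> rw [hq] at ih <;>
      rcases c with _ | _ | _ | c <;> try trivial
    · -- s0, c = 0
      rw [ih]; exact ⟨by simp, by simp⟩
    · -- sa, c = 0
      refine ⟨by simp, fun x hx => ?_⟩
      rcases List.mem_append.1 hx with hx | hx
      · exact ih.2 x hx
      · simpa using hx
    · -- sa, c = 1
      exact good_of_zeros_snoc ih.1 ih.2
    · -- sg, c = 0
      exact good_snoc ih (Or.inl rfl)
    · -- sg, c = 1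
      exact good_snoc ih (Or.inr rfl)
    · -- sg, c = 2
      exact ⟨w, ih, rfl⟩
    · -- st, c = 0
      obtain ⟨A, hA, rfl⟩ := ih
      exact ⟨A, [0], hA, ⟨by simp, by simp⟩, by simp⟩
    · -- sta, c = 0
      obtain ⟨A, B, hA, ⟨hB1, hB2⟩, rfl⟩ := ih
      refine ⟨A, B ++ [0], hA, ⟨by simp, fun x hx => ?_⟩, by simp⟩
      rcases List.mem_append.1 hx with hx | hx
      · exact hB2 x hx
      · simpa using hx
    · -- sta, c = 1
      obtain ⟨A, B, hA, ⟨hB1, hB2⟩, rfl⟩ := ih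
      exact mem_WL.2 ⟨A, B ++ [1], hA, good_of_zeros_snoc hB1 hB2, by simp⟩
    · -- sacc, c = 0
      obtain ⟨A, B, hA, hB, rfl⟩ := mem_WL.1 ih
      exact mem_WL.2 ⟨A, B ++ [0], hA, good_snoc hB (Or.inl rfl), by simp⟩
    · -- sacc, c = 1
      obtain ⟨A, B, hA, hB, rfl⟩ := mem_WL.1 ih
      exact mem_WL.2 ⟨A, B ++ [1], hA, good_snoc hB (Or.inr rfl), by simp⟩

lemma mem_WL_iff_run (w : Word) : w ∈ WL ↔ runS .s0 w = .sacc := by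
  refine ⟨WL_run, fun h => ?_⟩
  have := classify w
  rw [h] at this
  exact this

end Stmt18Aux

section Stmt18Aux2

/-- Evaluation of a word in `E1M` under a letter assignment. -/
def ev (g : ℕ → E1M) (w : Word) : E1M := (w.map g).prod

lemma ev_snoc (g : ℕ → E1M) (w : Word) (c : ℕ) :
    ev g (w ++ [c]) = ev g w * g c := by simp [ev]

def g1 : ℕ → E1M
  | 0 => .c | 1 => .b | 2 => .a | _ => .z0
def g2 : ℕ → E1M
  | 0 => .e1 | 1 => .a | 2 => .c | _ => .e1
def g3 : ℕ → E1M
  | 0 => .b | 1 => .c | 2 => .e1 | _ => .e1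
def g4 : ℕ → E1M
  | 0 => .e1 | 1 => .b | 2 => .a | _ => .e1
def g5 : ℕ → E1M
  | 0 => .e1 | 1 => .b | 2 => .c | _ => .e1

def GU : List ((E1M × E1M × E1M × E1M × E1M) × (St → St)) := [
  ((E1M.e1, E1M.e1, E1M.e1, E1M.e1, E1M.e1), trOf []),
  ((E1M.c, E1M.e1, E1M.b, E1M.e1, E1M.e1), trOf [0]),
  ((E1M.b, E1M.a, E1M.c, E1M.b, E1M.b), trOf [1]),
  ((E1M.a, E1M.c, E1M.e1, E1M.a, E1M.c), trOf [2]),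
  ((E1M.z0, E1M.e1, E1M.e1, E1M.e1, E1M.e1), trOf [3]),
  ((E1M.z0, E1M.e1, E1M.b, E1M.e1, E1M.e1), trOf [3, 0]),
  ((E1M.z0, E1M.a, E1M.c, E1M.b, E1M.b), trOf [3, 1]),
  ((E1M.z0, E1M.c, E1M.e1, E1M.a, E1M.c), trOf [3, 2]),
  ((E1M.z0, E1M.c, E1M.b, E1M.a, E1M.c), trOf [3, 2, 0]),
  ((E1M.z0, E1M.a, E1M.c, E1M.z0, E1M.c), trOf [3, 2, 1]),
  ((E1M.z0, E1M.c, E1M.e1, E1M.z0, E1M.c), trOf [3, 2, 2]),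
  ((E1M.z0, E1M.c, E1M.b, E1M.z0, E1M.c), trOf [3, 2, 2, 0]),
  ((E1M.z0, E1M.a, E1M.b, E1M.z0, E1M.c), trOf [3, 2, 2, 0, 1]),
  ((E1M.z0, E1M.z0, E1M.b, E1M.z0, E1M.c), trOf [3, 2, 2, 0, 1, 1]),
  ((E1M.z0, E1M.ac, E1M.b, E1M.z0, E1M.c), trOf [3, 2, 2, 0, 1, 2]),
  ((E1M.z0, E1M.z0, E1M.c, E1M.z0, E1M.c), trOf [3, 2, 1, 1]),
  ((E1M.z0, E1M.ac, E1M.c, E1M.z0, E1M.c), trOf [3, 2, 1, 2]),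
  ((E1M.z0, E1M.z0, E1M.c, E1M.b, E1M.b), trOf [3, 1, 1]),
  ((E1M.z0, E1M.ac, E1M.c, E1M.a, E1M.b), trOf [3, 1, 2]),
  ((E1M.z0, E1M.z0, E1M.c, E1M.z0, E1M.b), trOf [3, 1, 2, 1]),
  ((E1M.z0, E1M.ac, E1M.c, E1M.z0, E1M.b), trOf [3, 1, 2, 2]),
  ((E1M.z0, E1M.z0, E1M.c, E1M.a, E1M.b), trOf [3, 1, 1, 2]),
  ((E1M.z0, E1M.a, E1M.b, E1M.b, E1M.b), trOf [3, 0, 1]),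
  ((E1M.z0, E1M.z0, E1M.b, E1M.b, E1M.b), trOf [3, 0, 1, 1]),
  ((E1M.z0, E1M.ac, E1M.b, E1M.a, E1M.b), trOf [3, 0, 1, 2]),
  ((E1M.z0, E1M.z0, E1M.b, E1M.z0, E1M.b), trOf [3, 0, 1, 2, 1]),
  ((E1M.z0, E1M.ac, E1M.b, E1M.z0, E1M.b), trOf [3, 0, 1, 2, 2]),
  ((E1M.z0, E1M.z0, E1M.b, E1M.a, E1M.b), trOf [3, 0, 1, 1, 2]),
  ((E1M.ac, E1M.c, E1M.b, E1M.a, E1M.c), trOf [2, 0]),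
  ((E1M.ac, E1M.a, E1M.b, E1M.z0, E1M.c), trOf [2, 0, 1]),
  ((E1M.ac, E1M.z0, E1M.b, E1M.z0, E1M.c), trOf [2, 0, 1, 1]),
  ((E1M.b, E1M.z0, E1M.c, E1M.b, E1M.b), trOf [1, 1]),
  ((E1M.a, E1M.ac, E1M.c, E1M.a, E1M.b), trOf [1, 2]),
  ((E1M.ac, E1M.ac, E1M.c, E1M.a, E1M.b), trOf [1, 2, 0]),
  ((E1M.ac, E1M.z0, E1M.c, E1M.z0, E1M.b), trOf [1, 2, 0, 1]),
  ((E1M.a, E1M.z0, E1M.c, E1M.a, E1M.b), trOf [1, 1, 2]),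
  ((E1M.ac, E1M.z0, E1M.c, E1M.a, E1M.b), trOf [1, 1, 2, 0]),
  ((E1M.c, E1M.a, E1M.b, E1M.b, E1M.b), trOf [0, 1]),
  ((E1M.a, E1M.c, E1M.b, E1M.a, E1M.c), trOf [0, 2]),
  ((E1M.c, E1M.z0, E1M.b, E1M.b, E1M.b), trOf [0, 1, 1]),
  ((E1M.a, E1M.ac, E1M.b, E1M.a, E1M.b), trOf [0, 1, 2]),
  ((E1M.ac, E1M.ac, E1M.b, E1M.a, E1M.b), trOf [0, 1, 2, 0]),
  ((E1M.ac, E1M.z0, E1M.b, E1M.z0, E1M.b), trOf [0, 1, 2, 0, 1]),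
  ((E1M.a, E1M.z0, E1M.b, E1M.a, E1M.b), trOf [0, 1, 1, 2]),
  ((E1M.ac, E1M.z0, E1M.b, E1M.a, E1M.b), trOf [0, 1, 1, 2, 0])]

def GH : List ((St → St) × E1M) := [
  (trOf [], E1M.e1),
  (trOf [0], E1M.c),
  (trOf [1], E1M.b),
  (trOf [2], E1M.a),
  (trOf [3], E1M.z0),
  (trOf [2, 0], E1M.ac),
  (trOf [2, 0, 1], E1M.ac),
  (trOf [1, 2], E1M.a),
  (trOf [1, 2, 0], E1M.ac),
  (trOf [1, 2, 0, 1], E1M.ac),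
  (trOf [0, 1], E1M.c),
  (trOf [0, 1, 2], E1M.a),
  (trOf [0, 1, 2, 0], E1M.ac),
  (trOf [0, 1, 2, 0, 1], E1M.ac)]

lemma GU_one : ((1, 1, 1, 1, 1), trOf []) ∈ GU := by decide

lemma GU_clos0 : ∀ p ∈ GU,
    ((p.1.1 * E1M.c, p.1.2.1 * E1M.e1, p.1.2.2.1 * E1M.b, p.1.2.2.2.1 * E1M.e1,
      p.1.2.2.2.2 * E1M.e1), fun q => step (p.2 q) 0) ∈ GU := by decide

lemma GU_clos1 : ∀ p ∈ GU,
    ((p.1.1 * E1M.b, p.1.2.1 * E1M.a, p.1.2.2.1 * E1M.c, p.1.2.2.2.1 * E1M.b,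
      p.1.2.2.2.2 * E1M.b), fun q => step (p.2 q) 1) ∈ GU := by decide

lemma GU_clos2 : ∀ p ∈ GU,
    ((p.1.1 * E1M.a, p.1.2.1 * E1M.c, p.1.2.2.1 * E1M.e1, p.1.2.2.2.1 * E1M.a,
      p.1.2.2.2.2 * E1M.c), fun q => step (p.2 q) 2) ∈ GU := by decide

lemma GU_clos3 : ∀ p ∈ GU,
    ((p.1.1 * E1M.z0, p.1.2.1 * E1M.e1, p.1.2.2.1 * E1M.e1, p.1.2.2.2.1 * E1M.e1,
      p.1.2.2.2.2 * E1M.e1), fun _ => St.sd) ∈ GU := by decide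

lemma GU_fun : ∀ p ∈ GU, ∀ p' ∈ GU, p.1 = p'.1 → p = p' := by decide

lemma GH_one : (trOf [], (1 : E1M)) ∈ GH := by decide

lemma GH_clos0 : ∀ p ∈ GH, ((fun q => step (p.1 q) 0), p.2 * E1M.c) ∈ GH := by decide
lemma GH_clos1 : ∀ p ∈ GH, ((fun q => step (p.1 q) 1), p.2 * E1M.b) ∈ GH := by decide
lemma GH_clos2 : ∀ p ∈ GH, ((fun q => step (p.1 q) 2), p.2 * E1M.a) ∈ GH := by decide
lemma GH_clos3 : ∀ p ∈ GH, ((fun _ => St.sd), p.2 * E1M.z0) ∈ GH := by decide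

lemma GH_sep : ∀ p ∈ GH, ∀ p' ∈ GH,
    ((runS (p.1 (runS .s0 [0, 1])) [1] = .sacc ↔ runS (p'.1 (runS .s0 [0, 1])) [1] = .sacc) ∧
     (runS (p.1 (runS .s0 [0])) [1, 2, 0, 1] = .sacc ↔
       runS (p'.1 (runS .s0 [0])) [1, 2, 0, 1] = .sacc) ∧
     (runS (p.1 (runS .s0 [])) [1, 2, 0, 1] = .sacc ↔
       runS (p'.1 (runS .s0 [])) [1, 2, 0, 1] = .sacc) ∧
     (runS (p.1 (runS .s0 [0, 1])) [0, 1] = .sacc ↔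
       runS (p'.1 (runS .s0 [0, 1])) [0, 1] = .sacc) ∧
     (runS (p.1 (runS .s0 [])) [0, 1, 2, 0, 1] = .sacc ↔
       runS (p'.1 (runS .s0 [])) [0, 1, 2, 0, 1] = .sacc)) → p.2 = p'.2 := by decide

/-- Representative words mapping onto each element of `E1M` under `ev g1`. -/
def repE : E1M → Word
  | .e1 => [] | .a => [2] | .b => [1] | .c => [0] | .ac => [2, 0] | .z0 => [3]

lemma ev_repE : ∀ m : E1M, ev g1 (repE m) = m := by intro m; cases m <;> decide

end Stmt18Aux2

section Stmt18Aux3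

lemma inv_GU : ∀ w : Word,
    ((ev g1 w, ev g2 w, ev g3 w, ev g4 w, ev g5 w), trOf w) ∈ GU := by
  intro w
  induction w using List.reverseRecOn with
  | nil => exact GU_one
  | append_singleton w c ih =>
    rw [ev_snoc, ev_snoc, ev_snoc, ev_snoc, ev_snoc, trOf_snoc]
    rcases c with _ | _ | _ | c
    · exact GU_clos0 _ ih
    · exact GU_clos1 _ ih
    · exact GU_clos2 _ ih
    · show ((_ * g1 (c + 3), _ * g2 (c + 3), _ * g3 (c + 3), _ * g4 (c + 3),
        _ * g5 (c + 3)), fun q => step (trOf w q) (c + 3)) ∈ GU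
      simp only [step_ge3]
      exact GU_clos3 _ ih

lemma tr_det {m₁ m₂ : Word}
    (h1 : ev g1 m₁ = ev g1 m₂) (h2 : ev g2 m₁ = ev g2 m₂) (h3 : ev g3 m₁ = ev g3 m₂)
    (h4 : ev g4 m₁ = ev g4 m₂) (h5 : ev g5 m₁ = ev g5 m₂) : trOf m₁ = trOf m₂ := by
  have e := GU_fun _ (inv_GU m₁) _ (inv_GU m₂) (by rw [h1, h2, h3, h4, h5])
  exact congrArg Prod.snd e

lemma inv_GH : ∀ w : Word, (trOf w, ev g1 w) ∈ GH := by
  intro w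
  induction w using List.reverseRecOn with
  | nil => exact GH_one
  | append_singleton w c ih =>
    rw [ev_snoc, trOf_snoc]
    rcases c with _ | _ | _ | c
    · exact GH_clos0 _ ih
    · exact GH_clos1 _ ih
    · exact GH_clos2 _ ih
    · show ((fun q => step (trOf w q) (c + 3)), _ * g1 (c + 3)) ∈ GH
      simp only [step_ge3]
      exact GH_clos3 _ ih

lemma ev_flat (g : ℕ → E1M) (l : List (FreeMonoid ℕ)) :
    ev g (FreeMonoid.toList l.prod) = (l.map fun m => ev g (FreeMonoid.toList m)).prod := by
  induction l with
  | nil => rfl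
  | cons a l ih =>
    rw [List.prod_cons, List.map_cons, List.prod_cons, ← ih]
    show ev g (FreeMonoid.toList (a * l.prod)) = _
    rw [FreeMonoid.toList_mul]
    simp [ev]

lemma mem_WL_ctx (p m s : Word) :
    p ++ m ++ s ∈ WL ↔ runS (trOf m (runS .s0 p)) s = .sacc := by
  rw [mem_WL_iff_run, runS_append, runS_append]
  rfl

end Stmt18Aux3
theorem stmt18 :
    ∀ u v : Word, Satisfies E1M u v ↔
      Satisfies (SyntMonoid {x : Word | ∃ A B : Word,
        ((∀ c ∈ A, c = 0 ∨ c = 1) ∧ A.head? = some 0 ∧ 1 ∈ A) ∧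
        ((∀ c ∈ B, c = 0 ∨ c = 1) ∧ B.head? = some 0 ∧ 1 ∈ B) ∧
        x = A ++ 2 :: B}) u v := by
  intro u v
  show Satisfies E1M u v ↔ Satisfies (SyntMonoid WL) u v
  constructor
  · -- identities of E1M hold in the syntactic monoid
    intro hE χ
    have lift : ∀ x : ℕ, ∃ m : FreeMonoid ℕ, (SyntCon WL).mk' m = χ x := fun x =>
      Con.mk'_surjective (χ x)
    choose m hm using lift
    have key : ∀ w : Word, (w.map χ).prod = (SyntCon WL).mk' ((w.map m).prod) := by
      intro w
      rw [map_list_prod, List.map_map]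
      congr 1
      simp only [Function.comp_def, hm]
    rw [key u, key v]
    have hev : ∀ g : ℕ → E1M, Satisfies E1M u v →
        ev g (FreeMonoid.toList ((u.map m).prod)) =
        ev g (FreeMonoid.toList ((v.map m).prod)) := by
      intro g hE'
      rw [ev_flat, ev_flat, List.map_map, List.map_map]
      exact hE' _
    have htr : trOf (FreeMonoid.toList ((u.map m).prod)) =
        trOf (FreeMonoid.toList ((v.map m).prod)) :=
      tr_det (hev g1 hE) (hev g2 hE) (hev g3 hE) (hev g4 hE) (hev g5 hE)
    have rel : (SyntCon WL) ((u.map m).prod) ((v.map m).prod) := by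
      intro p s
      rw [show (p ++ FreeMonoid.toList ((u.map m).prod) ++ s ∈ WL ↔ _) from
        mem_WL_ctx p _ s, mem_WL_ctx, htr]
    exact (Con.eq _).2 rel
  · -- identities of the syntactic monoid hold in E1M
    intro hS χ
    set ms : ℕ → FreeMonoid ℕ := fun x => FreeMonoid.ofList (repE (χ x)) with hms
    have h := hS fun x => (SyntCon WL).mk' (ms x)
    have h' : (SyntCon WL).mk' ((u.map ms).prod) = (SyntCon WL).mk' ((v.map ms).prod) := by
      rw [map_list_prod, map_list_prod, List.map_map, List.map_map]
      exact h
    have rel : (SyntCon WL) ((u.map ms).prod) ((v.map ms).prod) := (Con.eq _).1 h'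
    set U := FreeMonoid.toList ((u.map ms).prod) with hU
    set V := FreeMonoid.toList ((v.map ms).prod) with hV
    have hctx : ∀ p s : Word, p ++ U ++ s ∈ WL ↔ p ++ V ++ s ∈ WL := rel
    have hU' := inv_GH U
    have hV' := inv_GH V
    have hcv : ∀ p s : Word, (runS (trOf U (runS .s0 p)) s = .sacc ↔
        runS (trOf V (runS .s0 p)) s = .sacc) :=
      fun p s => (mem_WL_ctx p U s).symm.trans ((hctx p s).trans (mem_WL_ctx p V s))
    have key : ev g1 U = ev g1 V :=
      GH_sep _ hU' _ hV' ⟨hcv [0, 1] [1], hcv [0] [1, 2, 0, 1], hcv [] [1, 2, 0, 1],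
        hcv [0, 1] [0, 1], hcv [] [0, 1, 2, 0, 1]⟩
    have ereduce : ∀ w : Word, ev g1 (FreeMonoid.toList ((w.map ms).prod)) = (w.map χ).prod := by
      intro w
      rw [ev_flat, List.map_map]
      congr 1
      refine List.map_congr_left fun x _ => ?_
      show ev g1 (FreeMonoid.toList (FreeMonoid.ofList (repE (χ x)))) = χ x
      rw [FreeMonoid.toList_ofList]
      exact ev_repE (χ x)
    rw [← ereduce u, ← ereduce v]
    exact key
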